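/- Let E be a Banach space and F an infinite-dimensional closed linear subspace of E. Then there exists a sequence (xₙ)ₙ of elements of F with Σₙ ‖xₙ‖ < ∞ that is ℓ∞-independent, i.e., for every bounded scalar sequence (tₙ)ₙ, the series Σₙ tₙ xₙ converges in F and Σₙ tₙ xₙ = 0 implies tₙ = 0 for all n; consequently the linear operator 𝒜 : ℓ∞ → F given by 𝒜((tₙ)ₙ) = Σₙ tₙ xₙ is well-defined and injective. -/

import Mathlib

open Filter Topology

/-- The series `∑ₙ f n` converges to `s`: its partial sums tend to `s`. -/
def HasSeriesSum {E : Type*} [AddCommMonoid E] [TopologicalSpace E] (f : ℕ → E) (s : E) : Prop :=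
  Filter.Tendsto (fun N => ∑ n ∈ Finset.range N, f n) Filter.atTop (nhds s)

/-- The Banach space `ℓ∞` of bounded scalar sequences. -/
noncomputable abbrev ellInfty (𝕜 : Type*) [RCLike 𝕜] := lp (fun _ : ℕ => 𝕜) ⊤

/-!
By Riesz's lemma, an infinite-dimensional normed space contains unit vectors `eₙ` such that each
`eₙ` is at distance at least `1/2` from the span of `e₀, …, eₙ₋₁`; put `xₙ = 8⁻ⁿ eₙ`. Suppose
`∑ tₙ xₙ = 0` with `t` bounded and not zero, let `S = sup ‖tₙ‖` and pick `m` with `‖tₘ‖ > S/2`.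
Then `tₘ xₘ` differs from an element of the span of the earlier terms by minus the tail
`∑_{n>m} tₙ xₙ`, so `‖tₘ‖ 8⁻ᵐ / 2 ≤ ‖tail‖ ≤ S 8⁻ᵐ / 7 < ‖tₘ‖ 8⁻ᵐ / 2`. Since `∑ ‖xₙ‖ < ∞`,
`t ↦ ∑ tₙ xₙ` is a well-defined linear map on `ℓ∞`, injective by this argument.
-/

open Set

theorem exists_seq_forall_image_Iio {α : Type*} (Q : Set α → α → Prop)
    (h : ∀ s : Set α, s.Finite → ∃ y, Q s y) : ∃ f : ℕ → α, ∀ n, Q (f '' Iio n) (f n) := by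
  classical
  choose g hg using fun s : Finset α => h s s.finite_toSet
  let L : ℕ → Finset α := fun n => Nat.rec ∅ (fun _ s => insert (g s) s) n
  have hL : ∀ n, L n = (Finset.range n).image fun k => g (L k) := by
    intro n
    induction n with
    | zero => rfl
    | succ n ih => rw [Finset.range_add_one, Finset.image_insert, ← ih]
  refine ⟨fun n => g (L n), fun n => ?_⟩
  simpa [hL n] using hg (L n)

section Riesz

variable {𝕜 V : Type*} [RCLike 𝕜] [NormedAddCommGroup V] [NormedSpace 𝕜 V]

theorem exists_norm_eq_one_forall_le_norm_sub_span (hV : ¬ FiniteDimensional 𝕜 V)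
    {s : Set V} (hs : s.Finite) {r : ℝ} (hr : r < 1) :
    ∃ v : V, ‖v‖ = 1 ∧ ∀ y ∈ Submodule.span 𝕜 s, r ≤ ‖v - y‖ := by
  have : FiniteDimensional 𝕜 (Submodule.span 𝕜 s) := .span_of_finite 𝕜 hs
  have hne : ∃ v, v ∉ Submodule.span 𝕜 s := by
    by_contra! h
    exact hV (Module.Finite.equiv (LinearEquiv.ofTop _ (Submodule.eq_top_iff'.2 h)))
  obtain ⟨v, -, hv, hsep⟩ :=
    riesz_lemma_of_lt_one (Submodule.closed_of_finiteDimensional _) hne hr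
  exact ⟨v, hv, hsep⟩

theorem exists_seq_norm_eq_one_forall_le_norm_sub_span (hV : ¬ FiniteDimensional 𝕜 V)
    {r : ℝ} (hr : r < 1) :
    ∃ e : ℕ → V, ∀ n, ‖e n‖ = 1 ∧ ∀ y ∈ Submodule.span 𝕜 (e '' Iio n), r ≤ ‖e n - y‖ :=
  exists_seq_forall_image_Iio _ fun _ hs => exists_norm_eq_one_forall_le_norm_sub_span hV hs hr

end Riesz

section Independence

variable {𝕜 V : Type*} [NormedField 𝕜] [NormedAddCommGroup V] [NormedSpace 𝕜 V]

variable (𝕜) in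
/-- Stated with unconditional sums; for absolutely summable `x` and bounded `t` these are the
limits of the partial sums. -/
def IsEllInftyIndependent (x : ℕ → V) : Prop :=
  ∀ t : ℕ → 𝕜, BddAbove (range fun n => ‖t n‖) → HasSum (fun n => t n • x n) 0 → t = 0

theorem mul_le_norm_smul_sub_of_forall_le_norm_sub {K : Submodule 𝕜 V} {v : V} {δ : ℝ}
    (hv : ∀ y ∈ K, δ ≤ ‖v - y‖) (c : 𝕜) {y : V} (hy : y ∈ K) : ‖c‖ * δ ≤ ‖c • v - y‖ := by
  rcases eq_or_ne c 0 with rfl | hc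
  · simp
  calc ‖c‖ * δ ≤ ‖c‖ * ‖v - c⁻¹ • y‖ := by gcongr; exact hv _ (K.smul_mem _ hy)
    _ = ‖c • v - y‖ := by rw [← norm_smul, smul_sub, smul_inv_smul₀ hc]

theorem norm_tsum_smul_nat_add_le {x : ℕ → V} {r : ℝ} (hr₀ : 0 ≤ r) (hr₁ : r < 1)
    (hx : ∀ n, ‖x n‖ ≤ r ^ n) {t : ℕ → 𝕜} {S : ℝ} (ht : ∀ n, ‖t n‖ ≤ S) (k : ℕ) :
    ‖∑' n, t (n + k) • x (n + k)‖ ≤ S * r ^ k * (1 - r)⁻¹ := by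
  refine tsum_of_norm_bounded ((hasSum_geometric_of_lt_one hr₀ hr₁).mul_left (S * r ^ k))
    fun n => ?_
  rw [norm_smul, mul_assoc, ← pow_add, add_comm k]
  exact mul_le_mul (ht _) (hx _) (norm_nonneg _) ((norm_nonneg _).trans (ht 0))

theorem isEllInftyIndependent_of_forall_le_norm_sub {x : ℕ → V}
    (hnorm : ∀ n, ‖x n‖ ≤ 8⁻¹ ^ n)
    (hsep : ∀ n, ∀ y ∈ Submodule.span 𝕜 (x '' Iio n), 8⁻¹ ^ n / 2 ≤ ‖x n - y‖) :
    IsEllInftyIndependent 𝕜 x := by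
  intro t ht hsum
  by_contra hne
  obtain ⟨n₀, hn₀⟩ := Function.ne_iff.1 hne
  set S := ⨆ n, ‖t n‖
  have hS : ∀ n, ‖t n‖ ≤ S := le_ciSup ht
  have hS₀ : 0 < S := (norm_pos_iff.2 hn₀).trans_le (hS n₀)
  obtain ⟨m, hm⟩ : ∃ m, S / 2 < ‖t m‖ := exists_lt_of_lt_ciSup (half_lt_self hS₀)
  have hsplit : t m • x m - -∑ n ∈ Finset.range m, t n • x n =
      -∑' n, t (n + (m + 1)) • x (n + (m + 1)) := by
    have := hsum.summable.sum_add_tsum_nat_add (m + 1)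
    rw [hsum.tsum_eq, Finset.sum_range_succ] at this
    rw [eq_neg_iff_add_eq_zero, ← this]
    abel
  have hpartial : -∑ n ∈ Finset.range m, t n • x n ∈ Submodule.span 𝕜 (x '' Iio m) :=
    Submodule.neg_mem _ <| Submodule.sum_mem _ fun n hn => Submodule.smul_mem _ _ <|
      Submodule.subset_span ⟨n, Finset.mem_range.1 hn, rfl⟩
  have hlow := mul_le_norm_smul_sub_of_forall_le_norm_sub (hsep m) (t m) hpartial
  have hup := norm_tsum_smul_nat_add_le (by norm_num) (by norm_num) hnorm hS (m + 1)
  rw [hsplit, norm_neg] at hlow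
  have : (0 : ℝ) < 8⁻¹ ^ m := by positivity
  rw [pow_succ] at hup
  nlinarith

end Independence

section RCLike

variable {𝕜 V : Type*} [RCLike 𝕜] [NormedAddCommGroup V] [NormedSpace 𝕜 V]

theorem exists_summable_norm_isEllInftyIndependent (hV : ¬ FiniteDimensional 𝕜 V) :
    ∃ x : ℕ → V, Summable (fun n => ‖x n‖) ∧ IsEllInftyIndependent 𝕜 x := by
  obtain ⟨e, he⟩ := exists_seq_norm_eq_one_forall_le_norm_sub_span (𝕜 := 𝕜) hV
    (show (1 / 2 : ℝ) < 1 by norm_num)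
  have hpow (n : ℕ) : ‖(8⁻¹ : 𝕜) ^ n‖ = 8⁻¹ ^ n := by
    rw [norm_pow, norm_inv, RCLike.norm_ofNat]
  have hnorm (n : ℕ) : ‖(8⁻¹ : 𝕜) ^ n • e n‖ = 8⁻¹ ^ n := by
    rw [norm_smul, hpow, (he n).1, mul_one]
  refine ⟨fun n => (8⁻¹ : 𝕜) ^ n • e n, ?_, isEllInftyIndependent_of_forall_le_norm_sub
    (fun n => (hnorm n).le) fun n y hy => ?_⟩
  · simpa only [hnorm] using summable_geometric_of_lt_one (by norm_num) (by norm_num)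
  · have hspan : Submodule.span 𝕜 ((fun n => (8⁻¹ : 𝕜) ^ n • e n) '' Iio n) ≤
        Submodule.span 𝕜 (e '' Iio n) :=
      Submodule.span_le.2 <| by
        rintro _ ⟨k, hk, rfl⟩
        exact Submodule.smul_mem _ _ (Submodule.subset_span ⟨k, hk, rfl⟩)
    rw [div_eq_mul_one_div, ← hpow]
    exact mul_le_norm_smul_sub_of_forall_le_norm_sub (he n).2 _ (hspan hy)

variable [CompleteSpace V]

theorem summable_smul_of_norm_le {x : ℕ → V} (hx : Summable fun n => ‖x n‖) {t : ℕ → 𝕜}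
    {C : ℝ} (ht : ∀ n, ‖t n‖ ≤ C) : Summable fun n => t n • x n :=
  .of_norm_bounded (hx.mul_left C) fun n => by
    rw [norm_smul]; exact mul_le_mul_of_nonneg_right (ht n) (norm_nonneg _)

theorem ellInfty.summable_smul {x : ℕ → V} (hx : Summable fun n => ‖x n‖) (t : ellInfty 𝕜) :
    Summable fun n => t n • x n :=
  summable_smul_of_norm_le hx (lp.norm_apply_le_norm ENNReal.top_ne_zero t)

variable (𝕜) in
noncomputable def ellInfty.seriesMap {x : ℕ → V} (hx : Summable fun n => ‖x n‖) :
    ellInfty 𝕜 →ₗ[𝕜] V where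
  toFun t := ∑' n, t n • x n
  map_add' a b := by
    simp only [lp.coeFn_add, Pi.add_apply, add_smul]
    exact (ellInfty.summable_smul hx a).tsum_add (ellInfty.summable_smul hx b)
  map_smul' c a := by
    simp only [lp.coeFn_smul, Pi.smul_apply, smul_eq_mul, mul_smul, RingHom.id_apply]
    exact (ellInfty.summable_smul hx a).tsum_const_smul c

theorem ellInfty.hasSum_seriesMap {x : ℕ → V} (hx : Summable fun n => ‖x n‖) (t : ellInfty 𝕜) :
    HasSum (fun n => t n • x n) (seriesMap 𝕜 hx t) :=
  (ellInfty.summable_smul hx t).hasSum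

theorem ellInfty.seriesMap_injective {x : ℕ → V} (hx : Summable fun n => ‖x n‖)
    (hind : IsEllInftyIndependent 𝕜 x) : Function.Injective (seriesMap 𝕜 hx) := by
  refine (injective_iff_map_eq_zero _).2 fun t ht => lp.ext <| hind t ?_ ?_
  · exact ⟨‖t‖, forall_mem_range.2 (lp.norm_apply_le_norm ENNReal.top_ne_zero t)⟩
  · simpa [ht] using hasSum_seriesMap hx t

end RCLike

theorem HasSum.hasSeriesSum_coe {𝕜 E : Type*} [Semiring 𝕜] [AddCommMonoid E] [Module 𝕜 E]
    [TopologicalSpace E] {F : Submodule 𝕜 E} {f : ℕ → F} {s : F} (h : HasSum f s) :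
    HasSeriesSum (fun n => (f n : E)) s :=
  (h.map F.subtype continuous_subtype_val).tendsto_sum_nat

/-- In any infinite-dimensional closed subspace `F` of a Banach space `E` there is a
sequence `(xₙ)ₙ` with `∑ₙ ‖xₙ‖ < ∞` that is `ℓ∞`-independent: for every bounded scalar
sequence `(tₙ)ₙ` the series `∑ₙ tₙ xₙ` converges to an element of `F`, and it converges to
`0` only if all `tₙ = 0`; consequently the linear operator `𝒜 : ℓ∞ → F`,
`𝒜((tₙ)ₙ) = ∑ₙ tₙ xₙ`, is well-defined and injective. -/
theorem exists_ellInfty_independent_sequence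
    {𝕜 : Type*} [RCLike 𝕜] {E : Type*} [NormedAddCommGroup E] [NormedSpace 𝕜 E]
    [CompleteSpace E] (F : Submodule 𝕜 E)
    (hFclosed : IsClosed (F : Set E)) (hFdim : ¬ Module.Finite 𝕜 F) :
    ∃ x : ℕ → E, (∀ n, x n ∈ F) ∧ Summable (fun n => ‖x n‖) ∧
      (∀ t : ℕ → 𝕜, (∃ C : ℝ, ∀ n, ‖t n‖ ≤ C) →
        (∃ s ∈ F, HasSeriesSum (fun n => t n • x n) s) ∧
          (HasSeriesSum (fun n => t n • x n) (0 : E) → t = 0)) ∧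
      ∃ A : ellInfty 𝕜 →ₗ[𝕜] F, Function.Injective A ∧
        ∀ t : ellInfty 𝕜, HasSeriesSum (fun n => (t : ∀ _ : ℕ, 𝕜) n • x n) ((A t : F) : E) := by
  have : CompleteSpace F := hFclosed.completeSpace_coe
  obtain ⟨x, hx, hind⟩ := exists_summable_norm_isEllInftyIndependent hFdim
  refine ⟨fun n => x n, fun n => (x n).2, hx, fun t ⟨C, hC⟩ => ?_, ellInfty.seriesMap 𝕜 hx,
    ellInfty.seriesMap_injective hx hind,
    fun t => (ellInfty.hasSum_seriesMap hx t).hasSeriesSum_coe⟩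
  have hsum := (summable_smul_of_norm_le hx hC).hasSum
  have hbdd : BddAbove (range fun n => ‖t n‖) := ⟨C, forall_mem_range.2 hC⟩
  refine ⟨⟨_, (∑' n, t n • x n).2, hsum.hasSeriesSum_coe⟩, fun h₀ => hind t hbdd ?_⟩
  have hzero : ∑' n, t n • x n = 0 :=
    Subtype.ext (tendsto_nhds_unique hsum.hasSeriesSum_coe h₀)
  rwa [hzero] at hsum
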